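/- arXiv:1201.0925 — 7 statements merged into one kernel-verified Lean document; each statement's English description precedes it below -/
import Mathlib

section
/- The function g(t) = cot(1/t) is strictly concave on the interval (1/π, ∞). -/
/-!
The derivative of `t ↦ cot t⁻¹` is `(t sin t⁻¹)⁻²`. With `u = t⁻¹ ∈ (0, π)` we have
`t sin t⁻¹ = sin u / u`, the slope of the chord of `sin` from `0` to `u`; since `sin` is strictly
concave on `[0, π]` this slope strictly decreases in `u`, hence strictly increases in `t`.
So the derivative is strictly decreasing, which gives strict concavity.
-/

open Real Set

theorem Real.hasDerivAt_cot {x : ℝ} (hx : sin x ≠ 0) : HasDerivAt cot (-(sin x ^ 2)⁻¹) x := by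
  have h := (hasDerivAt_cos x).div (hasDerivAt_sin x) hx
  rw [show (-sin x * sin x - cos x * cos x) / sin x ^ 2 = -(sin x ^ 2)⁻¹ by
    field_simp; linear_combination -sin_sq_add_cos_sq x] at h
  exact h.congr_of_eventuallyEq (.of_forall cot_eq_cos_div_sin)

theorem Real.hasDerivAt_cot_inv {t : ℝ} (ht : t ≠ 0) (hs : sin t⁻¹ ≠ 0) :
    HasDerivAt (fun t => cot t⁻¹) ((t * sin t⁻¹) ^ 2)⁻¹ t :=
  ((hasDerivAt_cot hs).comp t (hasDerivAt_inv ht)).congr_deriv (by ring)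

theorem Real.sin_div_strictAntiOn : StrictAntiOn (fun x => sin x / x) (Ioc 0 π) := by
  intro x hx y hy hxy
  have h := strictConcaveOn_sin_Icc.secant_strict_mono (a := 0) ⟨le_rfl, pi_pos.le⟩
    (Ioc_subset_Icc_self hx) (Ioc_subset_Icc_self hy) hx.1.ne' hy.1.ne' hxy
  simpa only [sin_zero, sub_zero] using h

theorem Real.inv_mem_Ioo_zero_pi {t : ℝ} (ht : π⁻¹ < t) : t⁻¹ ∈ Ioo 0 π := by
  have ht0 : 0 < t := (inv_pos.mpr pi_pos).trans ht
  exact ⟨inv_pos.mpr ht0, (inv_lt_comm₀ ht0 pi_pos).mpr ht⟩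

theorem Real.mul_sin_inv_pos {t : ℝ} (ht : π⁻¹ < t) : 0 < t * sin t⁻¹ := by
  obtain ⟨hu0, huπ⟩ := inv_mem_Ioo_zero_pi ht
  exact mul_pos (inv_pos.mp hu0) (sin_pos_of_pos_of_lt_pi hu0 huπ)

theorem Real.mul_sin_inv_strictMonoOn : StrictMonoOn (fun t => t * sin t⁻¹) (Ioi π⁻¹) := by
  intro s hs t ht hst
  have hu (r : ℝ) : r * sin r⁻¹ = sin r⁻¹ / r⁻¹ := by rw [div_inv_eq_mul, mul_comm]
  have hs' := inv_mem_Ioo_zero_pi hs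
  have ht' := inv_mem_Ioo_zero_pi ht
  simp only [hu s, hu t]
  exact sin_div_strictAntiOn (Ioo_subset_Ioc_self ht') (Ioo_subset_Ioc_self hs')
    (inv_strictAntiOn (inv_pos.mp hs'.1) (inv_pos.mp ht'.1) hst)

/-- The function `g(t) = cot (1/t)` is strictly concave on `(1/π, ∞)`. -/
theorem cot_inv_strictConcaveOn :
    StrictConcaveOn ℝ (Set.Ioi (π⁻¹)) (fun t : ℝ => Real.cot t⁻¹) := by
  have hderiv {t : ℝ} (ht : π⁻¹ < t) :
      HasDerivAt (fun t => cot t⁻¹) ((t * sin t⁻¹) ^ 2)⁻¹ t := by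
    obtain ⟨hu0, huπ⟩ := inv_mem_Ioo_zero_pi ht
    exact hasDerivAt_cot_inv (inv_pos.mp hu0).ne' (sin_pos_of_pos_of_lt_pi hu0 huπ).ne'
  refine StrictAntiOn.strictConcaveOn_of_deriv (convex_Ioi _)
    (fun t ht => (hderiv ht).continuousAt.continuousWithinAt) ?_
  rw [interior_Ioi]
  intro s hs t ht hst
  rw [(hderiv hs).deriv, (hderiv ht).deriv]
  have hpos := mul_sin_inv_pos hs
  exact inv_strictAnti₀ (by positivity)
    (pow_lt_pow_left₀ (mul_sin_inv_strictMonoOn hs ht hst) hpos.le two_ne_zero)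
end

section
/- For every t with 0 < t < π and every s with 0 < s ≤ 1, one has cot(t) ≤ s·cot(t·s), with equality if and only if s = 1. -/
/-!
Since `s * cot (t * s) = (t * s) * cot (t * s) / t`, the claim says that `x ↦ x * cot x` is
strictly decreasing on `(0, π)`. Its derivative `(sin x * cos x - x) / sin x ^ 2` is negative
there because `sin x * cos x = sin (2 * x) / 2 < x`.
-/

open Real Set

lemma hasDerivAt_mul_cot {x : ℝ} (hx : sin x ≠ 0) :
    HasDerivAt (fun y => y * cot y) ((sin x * cos x - x) / sin x ^ 2) x := by
  have hcot : (fun y => y * cot y) = fun y => y * cos y / sin y := by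
    funext y
    rw [cot_eq_cos_div_sin, mul_div_assoc]
  rw [hcot]
  refine (((hasDerivAt_id' x).mul (hasDerivAt_cos x)).div (hasDerivAt_sin x) hx).congr_deriv ?_
  simp only [Pi.mul_apply]
  linear_combination (-x / sin x ^ 2) * sin_sq_add_cos_sq x

lemma sin_mul_cos_lt_self {x : ℝ} (hx : 0 < x) : sin x * cos x < x := by
  have h := sin_lt (by positivity : 0 < 2 * x)
  rw [sin_two_mul] at h
  linarith

lemma strictAntiOn_mul_cot : StrictAntiOn (fun x => x * cot x) (Ioo 0 π) := by
  set f' : ℝ → ℝ := fun x => (sin x * cos x - x) / sin x ^ 2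
  have hderiv : ∀ x ∈ Ioo 0 π, HasDerivAt (fun y => y * cot y) (f' x) x :=
    fun x hx => hasDerivAt_mul_cot (sin_pos_of_pos_of_lt_pi hx.1 hx.2).ne'
  refine strictAntiOn_of_hasDerivWithinAt_neg (f' := f') (convex_Ioo 0 π)
    (fun x hx => (hderiv x hx).continuousAt.continuousWithinAt) ?_ ?_ <;> rw [interior_Ioo]
  · exact fun x hx => (hderiv x hx).hasDerivWithinAt
  · intro x hx
    exact div_neg_of_neg_of_pos (by linarith [sin_mul_cos_lt_self hx.1])
      (pow_pos (sin_pos_of_pos_of_lt_pi hx.1 hx.2) 2)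

/-- For `0 < t < π` and `0 < s ≤ 1`, one has `cot t ≤ s · cot (t·s)`,
with equality if and only if `s = 1`. -/
theorem cot_le_smul_cot (t s : ℝ) (ht : t ∈ Set.Ioo 0 π) (hs : s ∈ Set.Ioc (0:ℝ) 1) :
    Real.cot t ≤ s * Real.cot (t * s) ∧
    (Real.cot t = s * Real.cot (t * s) ↔ s = 1) := by
  obtain ⟨ht0, htπ⟩ := ht
  obtain ⟨hs0, hs1⟩ := hs
  rcases hs1.eq_or_lt with rfl | hs1
  · simp
  have hts : t * s < t := mul_lt_of_lt_one_right ht0 hs1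
  have hmul : t * cot t < t * (s * cot (t * s)) := by
    rw [← mul_assoc]
    exact strictAntiOn_mul_cot ⟨mul_pos ht0 hs0, hts.trans htπ⟩ ⟨ht0, htπ⟩ hts
  have hlt := lt_of_mul_lt_mul_left hmul ht0.le
  exact ⟨hlt.le, iff_of_false hlt.ne hs1.ne⟩
end

section
/- Let b, c ∈ (0, π), α ∈ (0, π), and α₁ ∈ (0, α/2]. Define z by cot(z) = (cot(b)·sin(α − α₁) + cot(c)·sin(α₁)) / sin(α) with z ∈ (0, π), and define z̃ = b·c·sin(α) / (b·sin(α₁) + c·sin(α − α₁)). Then z > z̃. -/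
/-!
With the weights `w₁ = sin (α - α₁) / sin α` and `w₂ = sin α₁ / sin α`, whose sum `s` exceeds `1`
(as `sin α < sin α₁ + sin (α - α₁)`), the hypothesis reads `cot z = w₁ cot b + w₂ cot c` and
`z̃ = (w₁ / b + w₂ / c)⁻¹`. Concavity of `u ↦ cot u⁻¹` gives `w₁ cot b + w₂ cot c ≤ s cot (s z̃)`,
and since `x cot x` is strictly decreasing on `(0, π)`, `s cot (s z̃) < cot z̃`. Thus
`cot z < cot z̃`, and `z > z̃` because `cot` is decreasing.
-/

open Real Set

namespace Real

lemma hasDerivAt_cot_s6 {x : ℝ} (hx : sin x ≠ 0) : HasDerivAt cot (-1 / sin x ^ 2) x := by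
  have h := (hasDerivAt_cos x).div (hasDerivAt_sin x) hx
  rw [show cos / sin = cot from funext fun y => (cot_eq_cos_div_sin y).symm] at h
  refine h.congr_deriv ?_
  congr 1
  linear_combination -sin_sq_add_cos_sq x

lemma strictAntiOn_cot : StrictAntiOn cot (Ioo 0 π) := by
  intro x hx y hy hxy
  have hsin : 0 < sin (y - x) := sin_pos_of_pos_of_lt_pi (by linarith) (by linarith [hx.1, hy.2])
  rw [cot_eq_cos_div_sin, cot_eq_cos_div_sin, div_lt_div_iff₀ (sin_pos_of_mem_Ioo hy)
    (sin_pos_of_mem_Ioo hx)]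
  rw [sin_sub] at hsin
  linarith

lemma mul_cos_lt_sin {x : ℝ} (hx : x ∈ Ioo 0 π) : x * cos x < sin x := by
  rcases le_or_gt (cos x) 0 with hcos | hcos
  · nlinarith [sin_pos_of_mem_Ioo hx, hx.1]
  · have hx2 : x < π / 2 := by
      by_contra! h
      linarith [cos_nonpos_of_pi_div_two_le_of_le h (by linarith [hx.2])]
    have := lt_tan hx.1 hx2
    rwa [tan_eq_sin_div_cos, lt_div_iff₀ hcos] at this

lemma strictAntiOn_sin_div : StrictAntiOn (fun x => sin x / x) (Ioo 0 π) := by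
  have hderiv : ∀ x ∈ Ioo 0 π,
      HasDerivAt (fun x => sin x / x) ((cos x * x - sin x * 1) / x ^ 2) x :=
    fun x hx => (hasDerivAt_sin x).div (hasDerivAt_id x) hx.1.ne'
  refine strictAntiOn_of_deriv_neg (convex_Ioo 0 π)
    (fun x hx => (hderiv x hx).continuousAt.continuousWithinAt) fun x hx => ?_
  rw [interior_Ioo] at hx
  rw [(hderiv x hx).deriv]
  have := mul_cos_lt_sin hx
  exact div_neg_of_neg_of_pos (by linarith) (pow_pos hx.1 2)

lemma strictAntiOn_mul_cot : StrictAntiOn (fun x => x * cot x) (Ioo 0 π) := by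
  have hderiv : ∀ x ∈ Ioo 0 π,
      HasDerivAt (fun x => x * cot x) (1 * cot x + x * (-1 / sin x ^ 2)) x :=
    fun x hx => (hasDerivAt_id x).mul (hasDerivAt_cot_s6 (sin_pos_of_mem_Ioo hx).ne')
  refine strictAntiOn_of_deriv_neg (convex_Ioo 0 π)
    (fun x hx => (hderiv x hx).continuousAt.continuousWithinAt) fun x hx => ?_
  rw [interior_Ioo] at hx
  rw [(hderiv x hx).deriv]
  have hsin := sin_pos_of_mem_Ioo hx
  have hsin_cos : sin x * cos x < x := by
    nlinarith [sin_lt hx.1, cos_le_one x, neg_one_le_cos x]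
  have : 1 * cot x + x * (-1 / sin x ^ 2) = (sin x * cos x - x) / sin x ^ 2 := by
    rw [cot_eq_cos_div_sin]; field_simp; ring
  rw [this]
  exact div_neg_of_neg_of_pos (by linarith) (pow_pos hsin 2)

lemma concaveOn_cot_inv : ConcaveOn ℝ (Ioi π⁻¹) (fun u => cot u⁻¹) := by
  have hmem : ∀ u ∈ Ioi π⁻¹, u⁻¹ ∈ Ioo 0 π := fun u hu =>
    ⟨inv_pos.2 ((inv_pos.2 pi_pos).trans hu), by
      simpa using inv_strictAnti₀ (inv_pos.2 pi_pos) hu⟩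
  have hderiv : ∀ u ∈ Ioi π⁻¹,
      HasDerivAt (fun u => cot u⁻¹) ((sin u⁻¹ / u⁻¹) ^ 2)⁻¹ u := by
    intro u hu
    have hu0 : u ≠ 0 := (inv_pos.2 pi_pos).trans hu |>.ne'
    have hsin := (sin_pos_of_mem_Ioo (hmem u hu)).ne'
    refine HasDerivAt.congr_deriv (f := fun u => cot u⁻¹)
      ((hasDerivAt_cot_s6 hsin).comp u (hasDerivAt_inv hu0)) ?_
    field_simp
  refine AntitoneOn.concaveOn_of_deriv (convex_Ioi _)
    (fun u hu => (hderiv u hu).continuousAt.continuousWithinAt)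
    (fun u hu => (hderiv u (interior_subset hu)).differentiableAt.differentiableWithinAt) ?_
  rw [interior_Ioi]
  intro u hu v hv huv
  rw [(hderiv u hu).deriv, (hderiv v hv).deriv]
  have hpos := div_pos (sin_pos_of_mem_Ioo (hmem u hu)) (hmem u hu).1
  have hle : sin u⁻¹ / u⁻¹ ≤ sin v⁻¹ / v⁻¹ :=
    strictAntiOn_sin_div.antitoneOn (hmem v hv) (hmem u hu)
      (inv_anti₀ ((inv_pos.2 pi_pos).trans hu) huv)
  gcongr

lemma sin_add_lt_sin_add_sin {x y : ℝ} (hx : 0 < x) (hy : 0 < y) (hxy : x + y < π) :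
    sin (x + y) < sin x + sin y := by
  have hsinx : 0 < sin x := sin_pos_of_pos_of_lt_pi hx (by linarith)
  have hsiny : 0 < sin y := sin_pos_of_pos_of_lt_pi hy (by linarith)
  have hcosy : cos y < 1 := by
    simpa using cos_lt_cos_of_nonneg_of_le_pi le_rfl (by linarith) hy
  rw [sin_add]
  nlinarith [mul_le_mul_of_nonneg_left (cos_le_one x) hsiny.le]

lemma mul_cot_mul_lt_cot {s x : ℝ} (hs : 1 < s) (hx : 0 < x) (hsx : s * x < π) :
    s * cot (s * x) < cot x := by
  have hlt : x < s * x := by nlinarith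
  have h := strictAntiOn_mul_cot ⟨hx, hlt.trans hsx⟩ ⟨hx.trans hlt, hsx⟩ hlt
  refine lt_of_mul_lt_mul_left ?_ hx.le
  linarith

lemma mul_cot_add_mul_cot_le {b c w₁ w₂ : ℝ} (hb : b ∈ Ioo 0 π) (hc : c ∈ Ioo 0 π)
    (hw₁ : 0 < w₁) (hw₂ : 0 < w₂) :
    w₁ * cot b + w₂ * cot c ≤ (w₁ + w₂) * cot ((w₁ + w₂) / (w₁ / b + w₂ / c)) := by
  have hs : 0 < w₁ + w₂ := add_pos hw₁ hw₂
  have h := concaveOn_cot_inv.2 (inv_strictAnti₀ hb.1 hb.2) (inv_strictAnti₀ hc.1 hc.2)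
    (div_pos hw₁ hs).le (div_pos hw₂ hs).le (by field_simp)
  simp only [smul_eq_mul, inv_inv] at h
  have hmean : (w₁ / (w₁ + w₂) * b⁻¹ + w₂ / (w₁ + w₂) * c⁻¹)⁻¹
      = (w₁ + w₂) / (w₁ / b + w₂ / c) := by
    have := hb.1.ne'; have := hc.1.ne'
    field_simp
  rw [hmean] at h
  calc w₁ * cot b + w₂ * cot c
      = (w₁ + w₂) * (w₁ / (w₁ + w₂) * cot b + w₂ / (w₁ + w₂) * cot c) := by field_simp
    _ ≤ _ := mul_le_mul_of_nonneg_left h hs.le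

theorem inv_lt_of_cot_eq_mul_cot_add_mul_cot {b c w₁ w₂ z : ℝ} (hb : b ∈ Ioo 0 π) (hc : c ∈ Ioo 0 π)
    (hz : z ∈ Ioo 0 π) (hw₁ : 0 < w₁) (hw₂ : 0 < w₂) (hw : 1 < w₁ + w₂)
    (hcot : cot z = w₁ * cot b + w₂ * cot c) :
    (w₁ / b + w₂ / c)⁻¹ < z := by
  set U := w₁ / b + w₂ / c
  have hU : w₁ + w₂ < π * U := by
    have h₁ : w₁ < w₁ * (π / b) := lt_mul_of_one_lt_right hw₁ ((one_lt_div hb.1).2 hb.2)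
    have h₂ : w₂ < w₂ * (π / c) := lt_mul_of_one_lt_right hw₂ ((one_lt_div hc.1).2 hc.2)
    calc w₁ + w₂ < w₁ * (π / b) + w₂ * (π / c) := add_lt_add h₁ h₂
      _ = π * U := by ring
  have hU₀ : 0 < U := add_pos (div_pos hw₁ hb.1) (div_pos hw₂ hc.1)
  have hsU : (w₁ + w₂) * U⁻¹ < π := by rwa [← div_eq_mul_inv, div_lt_iff₀ hU₀]
  have hUπ : U⁻¹ < π := lt_of_le_of_lt (le_mul_of_one_le_left (inv_pos.2 hU₀).le hw.le) hsU
  have hlt : cot z < cot U⁻¹ :=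
    calc cot z ≤ (w₁ + w₂) * cot ((w₁ + w₂) * U⁻¹) := by
          rw [hcot, ← div_eq_mul_inv]; exact mul_cot_add_mul_cot_le hb hc hw₁ hw₂
      _ < cot U⁻¹ := mul_cot_mul_lt_cot hw (inv_pos.2 hU₀) hsU
  exact (strictAntiOn_cot.lt_iff_gt hz ⟨inv_pos.2 hU₀, hUπ⟩).1 hlt

end Real

/-- Spherical vs. Euclidean secant comparison: if `z ∈ (0, π)` satisfies the spherical
secant identity `cot z = (cot b · sin(α−α₁) + cot c · sin α₁)/ sin α`, then `z` is strictly
larger than the Euclidean secant length `z̃ = b·c·sin α/(b·sin α₁ + c·sin(α−α₁))`. -/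
theorem spherical_secant_gt_euclidean (b c α α₁ z : ℝ)
    (hb : b ∈ Set.Ioo 0 π) (hc : c ∈ Set.Ioo 0 π)
    (hα : α ∈ Set.Ioo 0 π) (hα₁ : α₁ ∈ Set.Ioc 0 (α / 2))
    (hz : z ∈ Set.Ioo 0 π)
    (hcot : Real.cot z
      = (Real.cot b * Real.sin (α - α₁) + Real.cot c * Real.sin α₁) / Real.sin α) :
    z > b * c * Real.sin α / (b * Real.sin α₁ + c * Real.sin (α - α₁)) := by
  obtain ⟨hα₀, hαπ⟩ := hα
  obtain ⟨hα₁₀, hα₁α⟩ := hα₁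
  have hsin : 0 < sin α := sin_pos_of_pos_of_lt_pi hα₀ hαπ
  have hsin₁ : 0 < sin α₁ := sin_pos_of_pos_of_lt_pi hα₁₀ (by linarith)
  have hsin₂ : 0 < sin (α - α₁) := sin_pos_of_pos_of_lt_pi (by linarith) (by linarith)
  have hsub : sin α < sin (α - α₁) + sin α₁ := by
    simpa using sin_add_lt_sin_add_sin (x := α - α₁) (by linarith) hα₁₀ (by linarith)
  have key := inv_lt_of_cot_eq_mul_cot_add_mul_cot (w₁ := sin (α - α₁) / sin α) (w₂ := sin α₁ / sin α) hb hc hz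
    (div_pos hsin₂ hsin) (div_pos hsin₁ hsin)
    (by rwa [← add_div, one_lt_div hsin]) (by rw [hcot]; ring)
  convert key using 1
  have := hb.1.ne'; have := hc.1.ne'
  field_simp
  ring
end

section
/- Let f : M → ℝ be C² on a strongly convex neighborhood S of a point x̄ with ∇f(x̄) = 0, and suppose the eigenvalues of the Hessian of f on S lie in [h, H] with 0 < h ≤ H. Then for every x ∈ S: (a) h·d(x, x̄) ≤ ‖∇f(x)‖ ≤ H·d(x, x̄); (b) (h/2)·d²(x, x̄) ≤ f(x) − f(x̄) ≤ (H/2)·d²(x, x̄); and (c) h·(1 + h/H)·(f(x) − f(x̄)) ≤ ‖∇f(x)‖². -/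
/-!
Along a segment `x + t (y - x)` in `S`, the second derivative of `f` lies between `h ‖y - x‖²`
and `H ‖y - x‖²`, so `h/2 ‖y - x‖² ≤ f y - f x - ⟪∇f x, y - x⟫ ≤ H/2 ‖y - x‖²`; and a symmetric
Hessian with values in `[0, H]` on the diagonal has operator norm at most `H` (Cauchy–Schwarz for
the form), so `∇f` is `H`-Lipschitz on `S`. Expanding at `xbar`, where `∇f = 0`, gives (b) and the
upper half of (a). Expanding at `x` towards `xbar` gives `f x - f xbar ≤ ‖∇f x‖ d - h/2 d²`; with
(b) this yields `h d ≤ ‖∇f x‖`, and maximizing in `d` gives `2h (f x - f xbar) ≤ ‖∇f x‖²`, which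
implies (c) since `h / H ≤ 1`.
-/

open Set

theorem monotoneOn_Icc_of_hasDerivAt_nonneg {g g' : ℝ → ℝ} {a b : ℝ}
    (hg : ∀ t ∈ Icc a b, HasDerivAt g (g' t) t) (hg' : ∀ t ∈ Icc a b, 0 ≤ g' t) :
    MonotoneOn g (Icc a b) :=
  monotoneOn_of_hasDerivWithinAt_nonneg (convex_Icc a b)
    (fun t ht => (hg t ht).continuousAt.continuousWithinAt)
    (fun t ht => (hg t (interior_subset ht)).hasDerivWithinAt)
    (fun t ht => hg' t (interior_subset ht))

theorem le_sub_sub_deriv_of_le_deriv2 {φ φ' φ'' : ℝ → ℝ} {c : ℝ}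
    (hφ : ∀ t ∈ Icc (0 : ℝ) 1, HasDerivAt φ (φ' t) t)
    (hφ' : ∀ t ∈ Icc (0 : ℝ) 1, HasDerivAt φ' (φ'' t) t)
    (hc : ∀ t ∈ Icc (0 : ℝ) 1, c ≤ φ'' t) :
    c / 2 ≤ φ 1 - φ 0 - φ' 0 := by
  have h0 : (0 : ℝ) ∈ Icc (0 : ℝ) 1 := left_mem_Icc.2 zero_le_one
  have h1 : (1 : ℝ) ∈ Icc (0 : ℝ) 1 := right_mem_Icc.2 zero_le_one
  have slope_nonneg : ∀ t ∈ Icc (0 : ℝ) 1, 0 ≤ φ' t - φ' 0 - c * t := by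
    have hmono : MonotoneOn (fun t => φ' t - φ' 0 - c * t) (Icc 0 1) :=
      monotoneOn_Icc_of_hasDerivAt_nonneg
        (fun t ht => ((hφ' t ht).sub_const _).sub ((hasDerivAt_id t).const_mul c))
        (fun t ht => by simpa using hc t ht)
    intro t ht
    simpa using hmono h0 ht ht.1
  have hmono : MonotoneOn (fun t => φ t - t * φ' 0 - c / 2 * t ^ 2) (Icc 0 1) := by
    refine monotoneOn_Icc_of_hasDerivAt_nonneg (fun t ht => ?_) slope_nonneg
    refine (((hφ t ht).sub ((hasDerivAt_id' t).mul_const (φ' 0))).sub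
      ((hasDerivAt_pow 2 t).const_mul (c / 2))).congr_deriv ?_
    push_cast; ring
  have := hmono h0 h1 zero_le_one
  simp only at this
  linarith

section NormedSpace

variable {E : Type*} [NormedAddCommGroup E] [NormedSpace ℝ E] {f : E → ℝ}
  {f' : E → E →L[ℝ] ℝ} {f'' : E → E →L[ℝ] E →L[ℝ] ℝ} {S : Set E} {x y : E} {c : ℝ}

theorem Convex.le_sub_sub_of_le_hessian (hS : Convex ℝ S) (hx : x ∈ S) (hy : y ∈ S)
    (hf : ∀ z ∈ S, HasFDerivAt f (f' z) z) (hf' : ∀ z ∈ S, HasFDerivAt f' (f'' z) z)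
    (hc : ∀ z ∈ S, c * ‖y - x‖ ^ 2 ≤ f'' z (y - x) (y - x)) :
    c / 2 * ‖y - x‖ ^ 2 ≤ f y - f x - f' x (y - x) := by
  set γ : ℝ → E := fun t => x + t • (y - x)
  have hγS : ∀ t ∈ Icc (0 : ℝ) 1, γ t ∈ S := fun t ht => hS.add_smul_sub_mem hx hy ht
  have hγ : ∀ t, HasDerivAt γ (y - x) t := fun t =>
    (((hasDerivAt_id t).smul_const (y - x)).const_add x).congr_deriv (one_smul ℝ _)
  have := le_sub_sub_deriv_of_le_deriv2 (φ := f ∘ γ) (φ' := fun t => f' (γ t) (y - x))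
    (φ'' := fun t => f'' (γ t) (y - x) (y - x)) (c := c * ‖y - x‖ ^ 2)
    (fun t ht => (hf _ (hγS t ht)).comp_hasDerivAt t (hγ t))
    (fun t ht => by
      simpa using ((hf' _ (hγS t ht)).comp_hasDerivAt t (hγ t)).clm_apply
        (hasDerivAt_const t (y - x)))
    (fun t ht => hc _ (hγS t ht))
  simp only [γ, Function.comp_apply, zero_smul, one_smul, add_zero, add_sub_cancel] at this
  linarith

theorem Convex.sub_sub_le_of_hessian_le (hS : Convex ℝ S) (hx : x ∈ S) (hy : y ∈ S)
    (hf : ∀ z ∈ S, HasFDerivAt f (f' z) z) (hf' : ∀ z ∈ S, HasFDerivAt f' (f'' z) z)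
    (hc : ∀ z ∈ S, f'' z (y - x) (y - x) ≤ c * ‖y - x‖ ^ 2) :
    f y - f x - f' x (y - x) ≤ c / 2 * ‖y - x‖ ^ 2 := by
  have := hS.le_sub_sub_of_le_hessian (f := -f) (f' := -f') (f'' := -f'') (c := -c) hx hy
    (fun z hz => (hf z hz).neg) (fun z hz => (hf' z hz).neg)
    (fun z hz => by simpa only [Pi.neg_apply, neg_apply, neg_mul, neg_le_neg_iff] using hc z hz)
  simp only [Pi.neg_apply, neg_apply] at this
  linarith

end NormedSpace

theorem ContinuousLinearMap.norm_le_of_symm_of_nonneg_of_le {E : Type*} [SeminormedAddCommGroup E]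
    [NormedSpace ℝ E] {B : E →L[ℝ] E →L[ℝ] ℝ} {H : ℝ} (hH : 0 ≤ H)
    (hsymm : ∀ u w, B u w = B w u) (hpos : ∀ u, 0 ≤ B u u) (hle : ∀ u, B u u ≤ H * ‖u‖ ^ 2) :
    ‖B‖ ≤ H := by
  refine B.opNorm_le_bound₂ hH fun u w => ?_
  have cauchy_schwarz : B u w ^ 2 ≤ B u u * B w w := by
    have := discrim_le_zero (a := B w w) (b := 2 * B u w) (c := B u u) fun t =>
      (hpos (u + t • w)).trans_eq <| by
        simp only [map_add, map_smul, add_apply, smul_apply, smul_eq_mul, hsymm w u]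
        ring
    rw [discrim] at this
    nlinarith
  refine abs_le_of_sq_le_sq (cauchy_schwarz.trans ?_) (by positivity)
  calc B u u * B w w ≤ H * ‖u‖ ^ 2 * (H * ‖w‖ ^ 2) :=
        mul_le_mul (hle u) (hle w) (hpos w) (by positivity)
    _ = (H * ‖u‖ * ‖w‖) ^ 2 := by ring

theorem ContDiffOn.hasFDerivAt_fderiv_of_isOpen {E F : Type*} [NormedAddCommGroup E]
    [NormedSpace ℝ E] [NormedAddCommGroup F] [NormedSpace ℝ F] {f : E → F} {S : Set E} {x : E}
    (hf : ContDiffOn ℝ 2 f S) (hS : IsOpen S) (hx : x ∈ S) :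
    HasFDerivAt (fderiv ℝ f) (fderiv ℝ (fderiv ℝ f) x) x :=
  ((hf.fderiv_of_isOpen hS (m := 1) (by norm_num)).contDiffAt (hS.mem_nhds hx)).differentiableAt
    one_ne_zero |>.hasFDerivAt

section InnerProductSpace

variable {E : Type*} [NormedAddCommGroup E] [InnerProductSpace ℝ E] [CompleteSpace E]
  {f : E → ℝ} {S : Set E} {x y : E} {c : ℝ}

theorem Convex.le_sub_sub_inner_gradient (hS : Convex ℝ S) (hS' : IsOpen S)
    (hf : ContDiffOn ℝ 2 f S) (hc : ∀ z ∈ S, ∀ v, c * ‖v‖ ^ 2 ≤ iteratedFDeriv ℝ 2 f z ![v, v])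
    (hx : x ∈ S) (hy : y ∈ S) :
    c / 2 * ‖y - x‖ ^ 2 ≤ f y - f x - inner ℝ (gradient f x) (y - x) := by
  rw [inner_gradient_left]
  refine hS.le_sub_sub_of_le_hessian hx hy
    (fun z hz => ((hf.contDiffAt (hS'.mem_nhds hz)).differentiableAt two_ne_zero).hasFDerivAt)
    (fun z hz => hf.hasFDerivAt_fderiv_of_isOpen hS' hz) fun z hz => ?_
  simpa [iteratedFDeriv_two_apply] using hc z hz (y - x)

theorem Convex.sub_sub_inner_gradient_le (hS : Convex ℝ S) (hS' : IsOpen S)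
    (hf : ContDiffOn ℝ 2 f S) (hc : ∀ z ∈ S, ∀ v, iteratedFDeriv ℝ 2 f z ![v, v] ≤ c * ‖v‖ ^ 2)
    (hx : x ∈ S) (hy : y ∈ S) :
    f y - f x - inner ℝ (gradient f x) (y - x) ≤ c / 2 * ‖y - x‖ ^ 2 := by
  rw [inner_gradient_left]
  refine hS.sub_sub_le_of_hessian_le hx hy
    (fun z hz => ((hf.contDiffAt (hS'.mem_nhds hz)).differentiableAt two_ne_zero).hasFDerivAt)
    (fun z hz => hf.hasFDerivAt_fderiv_of_isOpen hS' hz) fun z hz => ?_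
  simpa [iteratedFDeriv_two_apply] using hc z hz (y - x)

theorem Convex.norm_gradient_sub_le (hS : Convex ℝ S) (hS' : IsOpen S)
    (hf : ContDiffOn ℝ 2 f S) (hc : 0 ≤ c)
    (hpos : ∀ z ∈ S, ∀ v, 0 ≤ iteratedFDeriv ℝ 2 f z ![v, v])
    (hle : ∀ z ∈ S, ∀ v, iteratedFDeriv ℝ 2 f z ![v, v] ≤ c * ‖v‖ ^ 2)
    (hx : x ∈ S) (hy : y ∈ S) :
    ‖gradient f y - gradient f x‖ ≤ c * ‖y - x‖ := by
  rw [gradient, gradient, ← map_sub, LinearIsometryEquiv.norm_map]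
  refine hS.norm_image_sub_le_of_norm_hasFDerivWithin_le
    (fun z hz => (hf.hasFDerivAt_fderiv_of_isOpen hS' hz).hasFDerivWithinAt) (fun z hz => ?_) hx hy
  refine ContinuousLinearMap.norm_le_of_symm_of_nonneg_of_le hc
    ((hf.contDiffAt (hS'.mem_nhds hz)).isSymmSndFDerivAt (by simp)) (fun v => ?_) (fun v => ?_)
  · simpa [iteratedFDeriv_two_apply] using hpos z hz v
  · simpa [iteratedFDeriv_two_apply] using hle z hz v

end InnerProductSpace

/-- Basic estimates near a nondegenerate minimizer. `f` is `C²` on a convex open set `S`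
containing the critical point `xbar` (`∇f xbar = 0`), with Hessian eigenvalues in `[h, H]` on
`S` (`0 < h ≤ H`). Then for every `x ∈ S`:
(a) `h·d(x,xbar) ≤ ‖∇f x‖ ≤ H·d(x,xbar)`;
(b) `(h/2)·d²(x,xbar) ≤ f x − f xbar ≤ (H/2)·d²(x,xbar)`;
(c) `h·(1 + h/H)·(f x − f xbar) ≤ ‖∇f x‖²`. -/
theorem estimates_near_minimizer {E : Type*} [NormedAddCommGroup E]
    [InnerProductSpace ℝ E] [CompleteSpace E]
    (f : E → ℝ) (S : Set E) (hconv : Convex ℝ S) (hopen : IsOpen S)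
    (xbar : E) (hxbar : xbar ∈ S) (h H : ℝ) (hh : 0 < h) (hhH : h ≤ H)
    (hf : ContDiffOn ℝ 2 f S)
    (hcrit : gradient f xbar = 0)
    (hHess : ∀ x ∈ S, ∀ v : E,
      h * ‖v‖ ^ 2 ≤ iteratedFDeriv ℝ 2 f x ![v, v] ∧
      iteratedFDeriv ℝ 2 f x ![v, v] ≤ H * ‖v‖ ^ 2) :
    ∀ x ∈ S,
      (h * dist x xbar ≤ ‖gradient f x‖ ∧ ‖gradient f x‖ ≤ H * dist x xbar) ∧
      (h / 2 * dist x xbar ^ 2 ≤ f x - f xbar ∧ f x - f xbar ≤ H / 2 * dist x xbar ^ 2) ∧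
      h * (1 + h / H) * (f x - f xbar) ≤ ‖gradient f x‖ ^ 2 := by
  intro x hx
  have hlo z hz v := (hHess z hz v).1
  have hhi z hz v := (hHess z hz v).2
  have growth_lo := hconv.le_sub_sub_inner_gradient hopen hf hlo hxbar hx
  have growth_hi := hconv.sub_sub_inner_gradient_le hopen hf hhi hxbar hx
  have grad_hi := hconv.norm_gradient_sub_le hopen hf (hh.le.trans hhH)
    (fun z hz v => (by positivity : 0 ≤ h * ‖v‖ ^ 2).trans (hlo z hz v)) hhi hxbar hx
  have growth_back := hconv.le_sub_sub_inner_gradient hopen hf hlo hx hxbar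
  simp only [hcrit, inner_zero_left, sub_zero] at growth_lo growth_hi grad_hi
  rw [norm_sub_rev, ← neg_sub x xbar, inner_neg_right] at growth_back
  have hcs := real_inner_le_norm (gradient f x) (x - xbar)
  rw [dist_eq_norm]
  set D := ‖x - xbar‖
  set G := ‖gradient f x‖
  -- `growth_lo` and `growth_back` give `h D² ≤ G D`
  have grad_lo : h * D ≤ G := by
    rcases (norm_nonneg (x - xbar)).eq_or_lt with hD | hD
    · rw [show D = 0 from hD.symm, mul_zero]
      exact norm_nonneg _
    · nlinarith
  -- `f x - f xbar ≤ G D - h/2 D² ≤ G² / (2h)`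
  have pl : 2 * h * (f x - f xbar) ≤ G ^ 2 := by nlinarith [sq_nonneg (G - h * D)]
  have hcoef : h * (1 + h / H) ≤ 2 * h := by
    have : h / H ≤ 1 := div_le_one_of_le₀ hhH (hh.le.trans hhH)
    nlinarith
  refine ⟨⟨grad_lo, grad_hi⟩, ⟨growth_lo, growth_hi⟩, ?_⟩
  calc h * (1 + h / H) * (f x - f xbar) ≤ 2 * h * (f x - f xbar) :=
        mul_le_mul_of_nonneg_right hcoef (by nlinarith)
    _ ≤ G ^ 2 := pl
end

section
/- Under the hypotheses of the previous statement, if a gradient descent iteration x⁺ = exp_x(−t∇f(x)) with step-size t ∈ (0, 2/H) satisfies f(x⁺) ≤ f(x) − t(1 − Ht/2)‖∇f(x)‖², then f(x⁺) − f(x̄) ≤ q·(f(x) − f(x̄)) where q = 1 − α(1 − α/2)·(h/H)·(1 + h/H) with α = tH, and 0 ≤ q < 1. -/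
open Set
open scoped RealInnerProductSpace Gradient

/-!
The Hessian bound `h ≤ ∇²f` makes `f` `h`-strongly convex on `S`:
`f y ≥ f x + ⟪∇f x, y - x⟫ + h/2 ‖y - x‖²`. Taking `x = x̄` shows that `x̄` minimizes `f`, and
minimizing the right-hand side over `y` gives the Polyak–Łojasiewicz inequality
`2h (f x - f x̄) ≤ ‖∇f x‖²`. Inserting it into the descent inequality contracts the optimality
gap by `1 - 2ht(1 - Ht/2)`, which is at most `q` because `h/H ≤ 1`.
-/

noncomputable def descentRate (α κ : ℝ) : ℝ := 1 - α * (1 - α / 2) * κ * (1 + κ)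

lemma descentRate_nonneg {α κ : ℝ} (hκ₀ : 0 ≤ κ) (hκ₁ : κ ≤ 1) : 0 ≤ descentRate α κ := by
  have hα : α * (1 - α / 2) ≤ 1 / 2 := by nlinarith [sq_nonneg (α - 1)]
  have hκ : κ * (1 + κ) ≤ 2 := by nlinarith
  have := mul_le_mul hα hκ (by positivity) (by norm_num)
  unfold descentRate
  linarith

lemma descentRate_lt_one {α κ : ℝ} (hα₀ : 0 < α) (hα₂ : α < 2) (hκ : 0 < κ) :
    descentRate α κ < 1 := by
  have : 0 < α * (1 - α / 2) * κ * (1 + κ) := by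
    have : 0 < 1 - α / 2 := by linarith
    positivity
  unfold descentRate
  linarith

lemma sub_le_descentRate_mul {h H t fx fplus fmin G : ℝ} (hh : 0 < h) (hhH : h ≤ H)
    (ht₀ : 0 ≤ t) (htH : t * H ≤ 2) (hmin : fmin ≤ fx) (hPL : 2 * h * (fx - fmin) ≤ G)
    (hdesc : fplus ≤ fx - t * (1 - H * t / 2) * G) :
    fplus - fmin ≤ descentRate (t * H) (h / H) * (fx - fmin) := by
  have hH : 0 < H := hh.trans_le hhH
  have hstep : 0 ≤ t * (1 - H * t / 2) := mul_nonneg ht₀ (by linarith)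
  have hgap : 0 ≤ fx - fmin := sub_nonneg.2 hmin
  have hκ : h * (1 + h / H) ≤ 2 * h := by
    have : h / H ≤ 1 := (div_le_one hH).2 hhH
    nlinarith
  have hrate : descentRate (t * H) (h / H) = 1 - t * (1 - H * t / 2) * (h * (1 + h / H)) := by
    unfold descentRate; field_simp
  calc fplus - fmin ≤ (fx - fmin) - t * (1 - H * t / 2) * G := by linarith
    _ ≤ (fx - fmin) - t * (1 - H * t / 2) * (2 * h * (fx - fmin)) := by gcongr
    _ ≤ (fx - fmin) - t * (1 - H * t / 2) * (h * (1 + h / H) * (fx - fmin)) := by gcongr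
    _ = descentRate (t * H) (h / H) * (fx - fmin) := by rw [hrate]; ring

lemma add_deriv_add_half_le_of_deriv2_ge {φ φ' φ'' : ℝ → ℝ} {m : ℝ}
    (hφ : ∀ s ∈ Icc (0 : ℝ) 1, HasDerivAt φ (φ' s) s)
    (hφ' : ∀ s ∈ Icc (0 : ℝ) 1, HasDerivAt φ' (φ'' s) s)
    (hm : ∀ s ∈ Icc (0 : ℝ) 1, m ≤ φ'' s) :
    φ 0 + φ' 0 + m / 2 ≤ φ 1 := by
  set ψ : ℝ → ℝ := fun s => φ s - m / 2 * s ^ 2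
  have hψ : ∀ s ∈ Icc (0 : ℝ) 1, HasDerivAt ψ (φ' s - m * s) s := fun s hs =>
    ((hφ s hs).sub ((hasDerivAt_pow 2 s).const_mul (m / 2))).congr_deriv (by norm_num; ring)
  have hψ' : ∀ s ∈ Icc (0 : ℝ) 1, HasDerivAt (fun s => φ' s - m * s) (φ'' s - m) s :=
    fun s hs => ((hφ' s hs).sub ((hasDerivAt_id' s).const_mul m)).congr_deriv (by ring)
  have hconvex : ConvexOn ℝ (Icc 0 1) ψ :=
    convexOn_of_hasDerivWithinAt2_nonneg (f' := fun s => φ' s - m * s)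
      (f'' := fun s => φ'' s - m) (convex_Icc 0 1)
      (fun s hs => (hψ s hs).continuousAt.continuousWithinAt)
      (fun s hs => (hψ s (interior_subset hs)).hasDerivWithinAt)
      (fun s hs => (hψ' s (interior_subset hs)).hasDerivWithinAt)
      (fun s hs => sub_nonneg.2 (hm s (interior_subset hs)))
  have hslope := hconvex.le_slope_of_hasDerivAt (left_mem_Icc.2 zero_le_one)
    (right_mem_Icc.2 zero_le_one) zero_lt_one (hψ 0 (left_mem_Icc.2 zero_le_one))
  simp only [slope_def_field, ψ] at hslope
  linarith

section StronglyConvex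

variable {E : Type*} [NormedAddCommGroup E] [InnerProductSpace ℝ E]

lemma neg_norm_sq_div_le_inner_add_mul_norm_sq {m : ℝ} (hm : 0 < m) (g d : E) :
    -(‖g‖ ^ 2 / (2 * m)) ≤ ⟪g, d⟫ + m / 2 * ‖d‖ ^ 2 := by
  have hsquare : ⟪g, d⟫ + m / 2 * ‖d‖ ^ 2 + ‖g‖ ^ 2 / (2 * m) = ‖g + m • d‖ ^ 2 / (2 * m) := by
    rw [norm_add_sq_real, real_inner_smul_right, norm_smul, Real.norm_of_nonneg hm.le]
    field_simp
    ring
  have : 0 ≤ ‖g + m • d‖ ^ 2 / (2 * m) := by positivity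
  linarith

variable {f : E → ℝ} {S : Set E} {m : ℝ}

lemma ContDiffOn.add_fderiv_sub_add_half_mul_norm_sq_le (hf : ContDiffOn ℝ 2 f S)
    (hconv : Convex ℝ S) (hopen : IsOpen S)
    (hHess : ∀ z ∈ S, ∀ v : E, m * ‖v‖ ^ 2 ≤ iteratedFDeriv ℝ 2 f z ![v, v])
    {x y : E} (hx : x ∈ S) (hy : y ∈ S) :
    f x + fderiv ℝ f x (y - x) + m / 2 * ‖y - x‖ ^ 2 ≤ f y := by
  have hseg : ∀ s ∈ Icc (0 : ℝ) 1, x + s • (y - x) ∈ S := fun s hs =>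
    hconv.add_smul_sub_mem hx hy hs
  have hline : ∀ s : ℝ, HasDerivAt (fun s : ℝ => x + s • (y - x)) (y - x) s := fun s =>
    ((hasDerivAt_id' s).smul_const (y - x)).const_add x |>.congr_deriv (one_smul ℝ _)
  have hf₂ : ∀ z ∈ S, ContDiffAt ℝ 2 f z := fun z hz => hf.contDiffAt (hopen.mem_nhds hz)
  have hφ : ∀ s ∈ Icc (0 : ℝ) 1, HasDerivAt (fun s : ℝ => f (x + s • (y - x)))
      (fderiv ℝ f (x + s • (y - x)) (y - x)) s := fun s hs =>
    ((hf₂ _ (hseg s hs)).differentiableAt (by norm_num)).hasFDerivAt.comp_hasDerivAt s (hline s)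
  have hφ' : ∀ s ∈ Icc (0 : ℝ) 1, HasDerivAt (fun s : ℝ => fderiv ℝ f (x + s • (y - x)) (y - x))
      (fderiv ℝ (fderiv ℝ f) (x + s • (y - x)) (y - x) (y - x)) s := fun s hs => by
    have hD := (((hf₂ _ (hseg s hs)).fderiv_right (m := 1) (by norm_num)).differentiableAt
      one_ne_zero).hasFDerivAt
    exact ((ContinuousLinearMap.apply ℝ ℝ (y - x)).hasFDerivAt.comp _ hD).comp_hasDerivAt s
      (hline s)
  have key := add_deriv_add_half_le_of_deriv2_ge hφ hφ' fun s hs => by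
    simpa only [iteratedFDeriv_two_apply, Matrix.cons_val_zero, Matrix.cons_val_one] using
      hHess _ (hseg s hs) (y - x)
  simpa [mul_div_right_comm] using key

variable [CompleteSpace E]

lemma ContDiffOn.isMinOn_of_gradient_eq_zero (hf : ContDiffOn ℝ 2 f S) (hconv : Convex ℝ S)
    (hopen : IsOpen S) (hm : 0 ≤ m)
    (hHess : ∀ z ∈ S, ∀ v : E, m * ‖v‖ ^ 2 ≤ iteratedFDeriv ℝ 2 f z ![v, v])
    {xbar : E} (hxbar : xbar ∈ S) (hcrit : ∇ f xbar = 0) : IsMinOn f S xbar := by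
  refine isMinOn_iff.2 fun y hy => ?_
  have hlower := hf.add_fderiv_sub_add_half_mul_norm_sq_le hconv hopen hHess hxbar hy
  rw [← inner_gradient_left, hcrit, inner_zero_left] at hlower
  have : 0 ≤ m / 2 * ‖y - xbar‖ ^ 2 := by positivity
  linarith

lemma ContDiffOn.two_mul_sub_le_norm_gradient_sq (hf : ContDiffOn ℝ 2 f S) (hconv : Convex ℝ S)
    (hopen : IsOpen S) (hm : 0 < m)
    (hHess : ∀ z ∈ S, ∀ v : E, m * ‖v‖ ^ 2 ≤ iteratedFDeriv ℝ 2 f z ![v, v])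
    {x y : E} (hx : x ∈ S) (hy : y ∈ S) : 2 * m * (f x - f y) ≤ ‖∇ f x‖ ^ 2 := by
  have hlower := hf.add_fderiv_sub_add_half_mul_norm_sq_le hconv hopen hHess hx hy
  rw [← inner_gradient_left] at hlower
  have hsq := neg_norm_sq_div_le_inner_add_mul_norm_sq hm (∇ f x) (y - x)
  have : f x - f y ≤ ‖∇ f x‖ ^ 2 / (2 * m) := by linarith
  rwa [le_div_iff₀ (by positivity), mul_comm] at this

end StronglyConvex

/-- Linear convergence factor for one gradient-descent step: under the Hessian eigenvalue
bounds `0 < h ≤ H` on a convex open set `S` around the minimizer `xbar` of the `C²` function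
`f`, if the step `x⁺ = x − t·∇f(x)` with `t ∈ (0, 2/H)` satisfies the descent inequality
`f x⁺ ≤ f x − t(1 − Ht/2)‖∇f x‖²`, then `f x⁺ − f xbar ≤ q·(f x − f xbar)` with
`q = 1 − α(1 − α/2)(h/H)(1 + h/H)`, `α = tH`, and `0 ≤ q < 1`. -/
theorem gradient_descent_linear_rate {E : Type*} [NormedAddCommGroup E]
    [InnerProductSpace ℝ E] [CompleteSpace E]
    (f : E → ℝ) (S : Set E) (hconv : Convex ℝ S) (hopen : IsOpen S)
    (xbar : E) (hxbar : xbar ∈ S) (h H : ℝ) (hh : 0 < h) (hhH : h ≤ H)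
    (hf : ContDiffOn ℝ 2 f S)
    (hcrit : gradient f xbar = 0)
    (hHess : ∀ x ∈ S, ∀ v : E,
      h * ‖v‖ ^ 2 ≤ iteratedFDeriv ℝ 2 f x ![v, v] ∧
      iteratedFDeriv ℝ 2 f x ![v, v] ≤ H * ‖v‖ ^ 2)
    (x : E) (hx : x ∈ S) (t : ℝ) (ht : t ∈ Set.Ioo 0 (2 / H))
    (hdesc : f (x - t • gradient f x)
      ≤ f x - t * (1 - H * t / 2) * ‖gradient f x‖ ^ 2) :
    f (x - t • gradient f x) - f xbar
        ≤ (1 - (t * H) * (1 - (t * H) / 2) * (h / H) * (1 + h / H)) * (f x - f xbar) ∧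
      0 ≤ 1 - (t * H) * (1 - (t * H) / 2) * (h / H) * (1 + h / H) ∧
      1 - (t * H) * (1 - (t * H) / 2) * (h / H) * (1 + h / H) < 1 := by
  have hH : 0 < H := hh.trans_le hhH
  have htH : t * H < 2 := (lt_div_iff₀ hH).1 ht.2
  have hlower : ∀ z ∈ S, ∀ v : E, h * ‖v‖ ^ 2 ≤ iteratedFDeriv ℝ 2 f z ![v, v] :=
    fun z hz v => (hHess z hz v).1
  have hmin : f xbar ≤ f x := hf.isMinOn_of_gradient_eq_zero hconv hopen hh.le hlower hxbar hcrit hx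
  have hPL := hf.two_mul_sub_le_norm_gradient_sq hconv hopen hh hlower hx hxbar
  exact ⟨sub_le_descentRate_mul hh hhH ht.1.le htH.le hmin hPL hdesc,
    descentRate_nonneg (div_pos hh hH).le ((div_le_one hH).2 hhH),
    descentRate_lt_one (mul_pos ht.1 hH) htH (div_pos hh hH)⟩
end

section
/- On the unit circle S¹ with arc-length distance d, let x₁ = (cos θ₁, sin θ₁) and x₂ = (cos θ₂, sin θ₂) with θ₁ = 2π/5, θ₂ = −2π/5, and weights w₁ = 1/4, w₂ = 3/4. Then the function f₂(θ) = (1/2)(w₁·d(θ, θ₁)² + w₂·d(θ, θ₂)²) on (−π, π] has exactly two local minimizers: the global minimizer θ̄ = −π/5 and a local (non-global) minimizer θ̄′ = −7π/10. -/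
open Real Set

noncomputable def Fc : ℝ → ℝ := fun θ =>
  (1 / 2) * ((1 / 4) * Real.arccos (Real.cos (θ - 2 * π / 5)) ^ 2 +
    (3 / 4) * Real.arccos (Real.cos (θ + 2 * π / 5)) ^ 2)

lemma arccos_cos_sq {x : ℝ} (h1 : -π ≤ x) (h2 : x ≤ π) :
    Real.arccos (Real.cos x) ^ 2 = x ^ 2 := by
  rw [← Real.cos_abs, Real.arccos_cos (abs_nonneg x) (abs_le.mpr ⟨h1, h2⟩), sq_abs]

lemma regA {θ : ℝ} (h1 : -π ≤ θ) (h2 : θ ≤ -(3 * π / 5)) :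
    Fc θ = (1/2) * (θ + 7*π/10)^2 + 27*π^2/200 := by
  have hπ := Real.pi_pos
  have e1 : Real.cos (θ - 2 * π / 5) = Real.cos (θ + 8*π/5) := by
    rw [show θ + 8*π/5 = (θ - 2 * π / 5) + 2*π by ring, Real.cos_add_two_pi]
  simp only [Fc, e1]
  rw [arccos_cos_sq (by linarith) (by linarith),
      arccos_cos_sq (show -π ≤ θ + 2 * π / 5 by linarith) (by linarith)]
  ring

lemma regB {θ : ℝ} (h1 : -(3 * π / 5) ≤ θ) (h2 : θ ≤ 3 * π / 5) :
    Fc θ = (1/2) * (θ + π/5)^2 + 3*π^2/50 := by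
  have hπ := Real.pi_pos
  simp only [Fc]
  rw [arccos_cos_sq (show -π ≤ θ - 2 * π / 5 by linarith) (by linarith),
      arccos_cos_sq (show -π ≤ θ + 2 * π / 5 by linarith) (by linarith)]
  ring

lemma regC {θ : ℝ} (h1 : 3 * π / 5 ≤ θ) (h2 : θ ≤ 7 * π / 5) :
    Fc θ = (1/2) * (θ - 13*π/10)^2 + 27*π^2/200 := by
  have hπ := Real.pi_pos
  have e1 : Real.cos (θ + 2 * π / 5) = Real.cos (θ - 8*π/5) := by
    rw [show θ + 2 * π / 5 = (θ - 8*π/5) + 2*π by ring, Real.cos_add_two_pi]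
  simp only [Fc, e1]
  rw [arccos_cos_sq (show -π ≤ θ - 2 * π / 5 by linarith) (by linarith),
      arccos_cos_sq (show -π ≤ θ - 8 * π / 5 by linarith) (by linarith)]
  ring

lemma quad_not_localMin {a b v K θ : ℝ}
    (hform : ∀ x, a ≤ x → x ≤ b → Fc x = (1/2) * (x - v)^2 + K)
    (ha : a ≤ θ) (hb : θ ≤ b) (hav : a ≤ v) (hvb : v ≤ b) (hne : θ ≠ v) :
    ¬ IsLocalMin Fc θ := by
  intro hmin
  obtain ⟨ε, hε, hball⟩ := Metric.eventually_nhds_iff.mp hmin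
  have hθ : Fc θ = (1/2) * (θ - v)^2 + K := hform _ ha hb
  rcases lt_or_gt_of_ne hne with hlt | hgt
  · set t := min (ε/2) ((v - θ)/2) with ht
    have ht0 : 0 < t := lt_min (by linarith) (by linarith)
    have ht1 : t ≤ ε/2 := min_le_left _ _
    have ht2 : t ≤ (v - θ)/2 := min_le_right _ _
    have hx : Fc (θ + t) = (1/2) * (θ + t - v)^2 + K := hform _ (by linarith) (by linarith)
    have hd : dist (θ + t) θ < ε := by
      rw [Real.dist_eq, show θ + t - θ = t by ring, abs_of_pos ht0]; linarith
    have hle := hball hd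
    rw [hx, hθ] at hle
    nlinarith [mul_pos ht0 (show 0 < v - θ by linarith)]
  · set t := min (ε/2) ((θ - v)/2) with ht
    have ht0 : 0 < t := lt_min (by linarith) (by linarith)
    have ht1 : t ≤ ε/2 := min_le_left _ _
    have ht2 : t ≤ (θ - v)/2 := min_le_right _ _
    have hx : Fc (θ - t) = (1/2) * (θ - t - v)^2 + K := hform _ (by linarith) (by linarith)
    have hd : dist (θ - t) θ < ε := by
      rw [Real.dist_eq, show θ - t - θ = -t by ring, abs_neg, abs_of_pos ht0]; linarith
    have hle := hball hd
    rw [hx, hθ] at hle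
    nlinarith [mul_pos ht0 (show 0 < θ - v by linarith)]

lemma tri_ineq (θ : ℝ) :
    4*π/5 ≤ Real.arccos (Real.cos (θ - 2 * π / 5)) + Real.arccos (Real.cos (θ + 2 * π / 5)) := by
  have hπ := Real.pi_pos
  set x := θ - 2 * π / 5 with hxdef
  set y := θ + 2 * π / 5 with hydef
  set a := Real.arccos (Real.cos x) with hadef
  set b := Real.arccos (Real.cos y) with hbdef
  have ha0 : 0 ≤ a := Real.arccos_nonneg _
  have hb0 : 0 ≤ b := Real.arccos_nonneg _
  have haπ : a ≤ π := Real.arccos_le_pi _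
  have hbπ : b ≤ π := Real.arccos_le_pi _
  have hca : Real.cos a = Real.cos x :=
    Real.cos_arccos (Real.neg_one_le_cos x) (Real.cos_le_one x)
  have hcb : Real.cos b = Real.cos y :=
    Real.cos_arccos (Real.neg_one_le_cos y) (Real.cos_le_one y)
  have hsa : Real.sin a = |Real.sin x| := by
    rw [hadef, Real.sin_arccos, show 1 - Real.cos x ^ 2 = Real.sin x ^ 2 by
      nlinarith [Real.sin_sq_add_cos_sq x], Real.sqrt_sq_eq_abs]
  have hsb : Real.sin b = |Real.sin y| := by
    rw [hbdef, Real.sin_arccos, show 1 - Real.cos y ^ 2 = Real.sin y ^ 2 by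
      nlinarith [Real.sin_sq_add_cos_sq y], Real.sqrt_sq_eq_abs]
  have hkey : Real.cos (a + b) ≤ Real.cos (4*π/5) := by
    have h1 : Real.cos (a + b) = Real.cos x * Real.cos y - |Real.sin x| * |Real.sin y| := by
      rw [Real.cos_add, hca, hcb, hsa, hsb]
    have h2 : Real.cos (4*π/5) = Real.cos x * Real.cos y + Real.sin x * Real.sin y := by
      rw [← Real.cos_sub, show x - y = -(4*π/5) by rw [hxdef, hydef]; ring, Real.cos_neg]
    have h3 : -( |Real.sin x| * |Real.sin y| ) ≤ Real.sin x * Real.sin y := by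
      rw [← abs_mul]; exact neg_abs_le _
    linarith
  rcases le_or_gt (a + b) π with hle | hgt
  · by_contra hcon
    push_neg at hcon
    have := Real.strictAntiOn_cos ⟨by linarith, hle⟩ ⟨by linarith, by linarith⟩ hcon
    linarith
  · linarith

lemma glob_min (θ : ℝ) : 3*π^2/50 ≤ Fc θ := by
  have hπ := Real.pi_pos
  have h := tri_ineq θ
  have ha0 : 0 ≤ Real.arccos (Real.cos (θ - 2 * π / 5)) := Real.arccos_nonneg _
  have hb0 : 0 ≤ Real.arccos (Real.cos (θ + 2 * π / 5)) := Real.arccos_nonneg _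
  set a := Real.arccos (Real.cos (θ - 2 * π / 5))
  set b := Real.arccos (Real.cos (θ + 2 * π / 5))
  have hFc : Fc θ = (1/2) * ((1/4) * a^2 + (3/4) * b^2) := rfl
  rw [hFc]
  nlinarith [sq_nonneg (a - 3*b),
    mul_nonneg (show (0:ℝ) ≤ a + b - 4*π/5 by linarith)
      (show (0:ℝ) ≤ a + b + 4*π/5 by linarith)]

lemma val1 : Fc (-π / 5) = 3*π^2/50 := by
  have hπ := Real.pi_pos
  rw [regB (by linarith) (by linarith)]
  ring

lemma val2 : Fc (-7 * π / 10) = 27*π^2/200 := by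
  have hπ := Real.pi_pos
  rw [regA (by linarith) (by linarith)]
  ring

lemma locmin2 : IsLocalMin Fc (-7 * π / 10) := by
  have hπ := Real.pi_pos
  have hmem : Set.Ioo (-π) (-(3*π/5)) ∈ nhds (-7 * π / 10) :=
    Ioo_mem_nhds (by linarith) (by linarith)
  refine Filter.eventually_of_mem hmem (fun x hx => ?_)
  rw [regA hx.1.le hx.2.le, val2]
  nlinarith [sq_nonneg (x + 7*π/10)]

/-- On the unit circle with arc-length distance `d(θ,φ) = arccos (cos (θ − φ))`, with data
`θ₁ = 2π/5`, `θ₂ = −2π/5` and weights `w₁ = 1/4`, `w₂ = 3/4`, the weighted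
sum-of-squared-distances `f₂` has, on `(−π, π]`, exactly two local minimizers: the global
minimizer `θ̄ = −π/5` and a local non-global minimizer `θ̄′ = −7π/10`. -/
theorem circle_two_local_minimizers :
    let f : ℝ → ℝ := fun θ =>
      (1 / 2) * ((1 / 4) * Real.arccos (Real.cos (θ - 2 * π / 5)) ^ 2 +
        (3 / 4) * Real.arccos (Real.cos (θ + 2 * π / 5)) ^ 2)
    {θ ∈ Set.Ioc (-π) π | IsLocalMin f θ} = {-π / 5, -7 * π / 10} ∧
    (∀ θ : ℝ, f (-π / 5) ≤ f θ) ∧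
    f (-π / 5) < f (-7 * π / 10) := by
  intro f
  have hπ := Real.pi_pos
  have hfF : f = Fc := rfl
  refine ⟨?_, ?_, ?_⟩
  · ext θ
    simp only [Set.mem_sep_iff, Set.mem_Ioc, Set.mem_insert_iff, Set.mem_singleton_iff, hfF]
    constructor
    · rintro ⟨⟨h1, h2⟩, hmin⟩
      by_contra hne
      push_neg at hne
      obtain ⟨hne1, hne2⟩ := hne
      rcases le_or_gt θ (-(3 * π / 5)) with hA | hA
      · exact quad_not_localMin (v := -(7 * π / 10)) (K := 27*π^2/200)
          (fun x hx1 hx2 => by rw [regA hx1 hx2]; ring)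
          h1.le hA (by linarith) (by linarith)
          (by intro h; exact hne2 (by linarith)) hmin
      · rcases le_or_gt θ (3 * π / 5) with hB | hB
        · exact quad_not_localMin (v := -(π / 5)) (K := 3*π^2/50)
            (fun x hx1 hx2 => by rw [regB hx1 hx2]; ring)
            hA.le hB (by linarith) (by linarith)
            (by intro h; exact hne1 (by linarith)) hmin
        · exact quad_not_localMin (v := 13*π/10) (K := 27*π^2/200)
            (fun x hx1 hx2 => regC hx1 hx2)
            hB.le (by linarith) (by linarith) (by linarith)
            (by intro h; linarith) hmin
    · rintro (rfl | rfl)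
      · refine ⟨⟨by linarith, by linarith⟩, ?_⟩
        exact Filter.Eventually.of_forall (fun x => by rw [val1]; exact glob_min x)
      · exact ⟨⟨by linarith, by linarith⟩, locmin2⟩
  · intro θ
    rw [hfF, val1]
    exact glob_min θ
  · rw [hfF, val1, val2]
    nlinarith [mul_pos Real.pi_pos Real.pi_pos]
end

section
/- On the unit circle with the same data (θ₁ = 2π/5, θ₂ = −2π/5, w₁ = 1/10, w₂ = 9/10), the weighted sum-of-squared-distances function f₂ has a unique critical point on S¹ minus the two antipodal points of the data, namely the global minimizer θ̄ = w₁θ₁ + w₂θ₂ = −8π/25. -/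
/-!
Away from the antipodes of the data, each distance `arccos (cos (θ - θᵢ))` equals `|θ - θ̃ᵢ|`
for a lift `θ̃ᵢ ∈ θᵢ + 2πℤ` that is constant on each of the three arcs they cut out. So `f₂` is
locally the quadratic `½ ∑ wᵢ (θ - θ̃ᵢ)²`, whose only critical point is `∑ wᵢ θ̃ᵢ`, and this lands
in its own arc only for the arc containing both data points.

For the minimum, `arccos ∘ cos` is the norm of `ℝ ⧸ 2πℤ`, so `d₁ + d₂ ≥ d(θ₁, θ₂) = 4π/5`, and
`w₁ d₁² + w₂ d₂² ≥ w₁ w₂ (d₁ + d₂)²` because (for `w₁ + w₂ = 1`) the difference is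
`(w₁ d₁ - w₂ d₂)²`. Both bounds are attained at `θ̄`.
-/

open Real Filter Topology

namespace Real

lemma arccos_cos_eq_abs {x : ℝ} (h : |x| ≤ π) : arccos (cos x) = |x| := by
  rcases le_or_gt 0 x with hx | hx
  · rw [abs_of_nonneg hx] at h ⊢
    exact arccos_cos hx h
  · rw [abs_of_neg hx] at h ⊢
    rw [← cos_neg]
    exact arccos_cos (by linarith) h

lemma arccos_cos_eq_norm_coe_addCircle (x : ℝ) :
    arccos (cos x) = ‖(x : AddCircle (2 * π))‖ := by
  have hle := AddCircle.norm_le_half_period (2 * π) (x := (x : AddCircle (2 * π)))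
    two_pi_pos.ne'
  rw [AddCircle.norm_eq] at hle ⊢
  rw [abs_of_pos two_pi_pos, mul_div_cancel_left₀ _ two_ne_zero] at hle
  rw [← arccos_cos_eq_abs hle, cos_sub_int_mul_two_pi]

lemma arccos_cos_sub_le (x y : ℝ) :
    arccos (cos (x - y)) ≤ arccos (cos x) + arccos (cos y) := by
  simp only [arccos_cos_eq_norm_coe_addCircle, AddCircle.coe_sub]
  exact norm_sub_le _ _

lemma arccos_cos_sub_sq_eventuallyEq {θ₀ a : ℝ} (k : ℤ) (h : |θ₀ - (a + k * (2 * π))| < π) :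
    (fun θ => arccos (cos (θ - a)) ^ 2) =ᶠ[𝓝 θ₀] fun θ => (θ - (a + k * (2 * π))) ^ 2 := by
  have hopen : IsOpen {θ : ℝ | |θ - (a + k * (2 * π))| < π} :=
    isOpen_lt (by fun_prop) continuous_const
  filter_upwards [hopen.mem_nhds h] with θ hθ
  rw [← cos_sub_int_mul_two_pi (θ - a) k, sub_sub, arccos_cos_eq_abs hθ.le, sq_abs]

end Real

noncomputable def weightedSqDistSum (w₁ w₂ a b θ : ℝ) : ℝ :=
  (1 / 2) * (w₁ * arccos (cos (θ - a)) ^ 2 + w₂ * arccos (cos (θ - b)) ^ 2)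

section
variable {w₁ w₂ : ℝ}

lemma hasDerivAt_weighted_sq_sum (hw : w₁ + w₂ = 1) (a b θ : ℝ) :
    HasDerivAt (fun θ => (1 / 2) * (w₁ * (θ - a) ^ 2 + w₂ * (θ - b) ^ 2))
      (θ - (w₁ * a + w₂ * b)) θ := by
  have h := ((((hasDerivAt_id θ).sub_const a).pow 2).const_mul w₁).add
    ((((hasDerivAt_id θ).sub_const b).pow 2).const_mul w₂) |>.const_mul (1 / 2 : ℝ)
  refine h.congr_deriv ?_
  norm_num only [id]
  linear_combination θ * hw

lemma weightedSqDistSum_critical_iff (hw : w₁ + w₂ = 1) {a b θ₀ : ℝ} (m n : ℤ)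
    (ha : |θ₀ - (a + m * (2 * π))| < π) (hb : |θ₀ - (b + n * (2 * π))| < π) :
    (DifferentiableAt ℝ (weightedSqDistSum w₁ w₂ a b) θ₀ ∧
        deriv (weightedSqDistSum w₁ w₂ a b) θ₀ = 0) ↔
      θ₀ = w₁ * (a + m * (2 * π)) + w₂ * (b + n * (2 * π)) := by
  have hloc : weightedSqDistSum w₁ w₂ a b =ᶠ[𝓝 θ₀] fun θ =>
      (1 / 2) * (w₁ * (θ - (a + m * (2 * π))) ^ 2 + w₂ * (θ - (b + n * (2 * π))) ^ 2) := by
    filter_upwards [arccos_cos_sub_sq_eventuallyEq m ha, arccos_cos_sub_sq_eventuallyEq n hb]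
      with θ hθa hθb
    simp only [weightedSqDistSum, hθa, hθb]
  have hderiv := hasDerivAt_weighted_sq_sum hw (a + m * (2 * π)) (b + n * (2 * π)) θ₀
  rw [hloc.differentiableAt_iff, hloc.deriv_eq, hderiv.deriv, sub_eq_zero]
  exact and_iff_right hderiv.differentiableAt

lemma mul_mul_add_sq_le_of_add_eq_one (hw : w₁ + w₂ = 1) (x y : ℝ) :
    w₁ * w₂ * (x + y) ^ 2 ≤ w₁ * x ^ 2 + w₂ * y ^ 2 := by
  have hsq : w₁ * x ^ 2 + w₂ * y ^ 2 - w₁ * w₂ * (x + y) ^ 2 = (w₁ * x - w₂ * y) ^ 2 := by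
    rw [eq_sub_of_add_eq hw]; ring
  linarith [sq_nonneg (w₁ * x - w₂ * y)]

lemma half_mul_arccos_cos_sq_le_weightedSqDistSum (hw : w₁ + w₂ = 1) (hw₁ : 0 ≤ w₁)
    (hw₂ : 0 ≤ w₂) (a b θ : ℝ) :
    (1 / 2) * (w₁ * w₂ * arccos (cos (a - b)) ^ 2) ≤ weightedSqDistSum w₁ w₂ a b θ := by
  have htri : arccos (cos (a - b)) ≤ arccos (cos (θ - a)) + arccos (cos (θ - b)) := by
    rw [add_comm]
    simpa using arccos_cos_sub_le (θ - b) (θ - a)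
  have hsq := pow_le_pow_left₀ (arccos_nonneg _) htri 2
  unfold weightedSqDistSum
  gcongr
  exact (mul_le_mul_of_nonneg_left hsq (mul_nonneg hw₁ hw₂)).trans
    (mul_mul_add_sq_le_of_add_eq_one hw _ _)

end

/-- On the unit circle with arc-length distance `d(θ,φ) = arccos (cos (θ − φ))`, with data
`θ₁ = 2π/5`, `θ₂ = −2π/5` and weights `w₁ = 1/10`, `w₂ = 9/10`, the weighted
sum-of-squared-distances `f₂` has a unique critical point on the circle minus the two
antipodes `−3π/5`, `3π/5` of the data points, namely the global minimizer
`θ̄ = w₁θ₁ + w₂θ₂ = −8π/25`. -/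
theorem circle_unique_critical_point :
    let f : ℝ → ℝ := fun θ =>
      (1 / 2) * ((1 / 10) * Real.arccos (Real.cos (θ - 2 * π / 5)) ^ 2 +
        (9 / 10) * Real.arccos (Real.cos (θ + 2 * π / 5)) ^ 2)
    (∀ θ ∈ Set.Ioc (-π) π, θ ≠ -3 * π / 5 → θ ≠ 3 * π / 5 →
      ((DifferentiableAt ℝ f θ ∧ deriv f θ = 0) ↔ θ = -8 * π / 25)) ∧
    ∀ θ : ℝ, f (-8 * π / 25) ≤ f θ := by
  intro f
  have hf : f = weightedSqDistSum (1 / 10) (9 / 10) (2 * π / 5) (-(2 * π / 5)) := by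
    funext θ
    simp only [f, weightedSqDistSum, sub_neg_eq_add]
  have hw : (1 / 10 : ℝ) + 9 / 10 = 1 := by norm_num
  have hπ := pi_pos
  rw [hf]
  refine ⟨fun θ ⟨hθl, hθr⟩ hne₁ hne₂ => ?_, fun θ => ?_⟩
  · rcases lt_or_gt_of_ne hne₁ with hleft | hmid_left
    · rw [weightedSqDistSum_critical_iff hw (-1) 0
        (abs_lt.2 ⟨by push_cast; linarith, by push_cast; linarith⟩)
        (abs_lt.2 ⟨by push_cast; linarith, by push_cast; linarith⟩)]
      push_cast
      constructor <;> intro h <;> linarith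
    rcases lt_or_gt_of_ne hne₂ with hmid_right | hright
    · rw [weightedSqDistSum_critical_iff hw 0 0
        (abs_lt.2 ⟨by push_cast; linarith, by push_cast; linarith⟩)
        (abs_lt.2 ⟨by push_cast; linarith, by push_cast; linarith⟩)]
      push_cast
      constructor <;> intro h <;> linarith
    · rw [weightedSqDistSum_critical_iff hw 0 1
        (abs_lt.2 ⟨by push_cast; linarith, by push_cast; linarith⟩)
        (abs_lt.2 ⟨by push_cast; linarith, by push_cast; linarith⟩)]
      push_cast
      constructor <;> intro h <;> linarith
  · refine le_of_eq_of_le ?_ (half_mul_arccos_cos_sq_le_weightedSqDistSum hw (by norm_num)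
      (by norm_num) _ _ θ)
    simp only [weightedSqDistSum]
    rw [arccos_cos_eq_abs (abs_le.2 ⟨by linarith, by linarith⟩),
      arccos_cos_eq_abs (abs_le.2 ⟨by linarith, by linarith⟩),
      arccos_cos_eq_abs (abs_le.2 ⟨by linarith, by linarith⟩),
      abs_of_neg (by linarith), abs_of_pos (by linarith), abs_of_pos (by linarith)]
    ring
end
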